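/- arXiv:1801.05887 — 2 statements merged into one kernel-verified Lean document; each statement's English description precedes it below -/
import Mathlib

section
/- (Tanaka, pathwise uniqueness) Let n ≥ 1, let Ω ⊂ ℝⁿ be a bounded open convex set, let W be an n-dimensional standard Brownian motion started at 0 on a probability space, and let x ∈ Ω̄. Suppose (X, μ, 𝐧) and (X', μ', 𝐧') both satisfy: the process has almost surely continuous paths contained in Ω̄; almost surely X_t = x + W_t + ∫_{[0,t]} 𝐧(s) μ(ds) for all t ≥ 0 (respectively X'_t = x + W_t + ∫_{[0,t]} 𝐧'(s) μ'(ds)); μ({t ≥ 0 : X_t ∉ ∂Ω}) = 0 (respectively for μ', X'); and for μ-almost every s, |𝐧(s)| = 1 and Ω ⊆ {y : ⟨𝐧(s), y − X_s⟩ ≥ 0} (respectively for 𝐧', μ', X'). Then almost surely X_t = X'_t for all t ≥ 0. -/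
open MeasureTheory ProbabilityTheory Real

/-- The function `F_d(t, k)`: the series
`∑ₙ exp(−(π²(2n+1)²/(8d²))·t) · (4(−1)ⁿ/(π(2n+1))) · cos((2n+1)πk/(2d))`. -/
noncomputable def Fd (d t k : ℝ) : ℝ :=
  ∑' m : ℕ, Real.exp (-(Real.pi ^ 2 * (2 * (m : ℝ) + 1) ^ 2 / (8 * d ^ 2)) * t) *
    (4 * (-1 : ℝ) ^ m / (Real.pi * (2 * (m : ℝ) + 1))) *
    Real.cos ((2 * (m : ℝ) + 1) * Real.pi * k / (2 * d))

/-- `W` is a standard Brownian motion started at `0` (with values in a real inner product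
space `E`), under the measure `P`: a.s. continuous paths, `W 0 = 0`, independent increments
over consecutive intervals, and every increment `W t - W s` (for `0 ≤ s ≤ t`) is a centered
Gaussian with covariance `(t - s) • Id`, expressed coordinate-freely by the fact that
`⟪v, W t - W s⟫` has law `N(0, (t - s) * ‖v‖²)` for every vector `v`. -/
def IsStdBM {Ω' : Type*} [MeasurableSpace Ω'] (P : Measure Ω') {E : Type*}
    [NormedAddCommGroup E] [InnerProductSpace ℝ E] [MeasurableSpace E] [BorelSpace E]
    (W : ℝ → Ω' → E) : Prop :=
  (∀ t, Measurable (W t)) ∧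
  (∀ᵐ ω ∂P, Continuous fun t : ℝ => W t ω) ∧
  (∀ᵐ ω ∂P, W 0 ω = 0) ∧
  (∀ s t : ℝ, 0 ≤ s → s ≤ t → ∀ v : E,
    Measure.map (fun ω => (inner ℝ v (W t ω - W s ω) : ℝ)) P
      = gaussianReal 0 (Real.toNNReal ((t - s) * ‖v‖ ^ 2))) ∧
  (∀ u : ℕ → ℝ, Monotone u → 0 ≤ u 0 →
    iIndepFun (fun j ω => W (u (j + 1)) ω - W (u j) ω) P)

/-- `X` is a reflecting Brownian motion in the set `D` under the measure `P`:
a.s. continuous paths contained in the closure of `D`, and there exist a standard Brownian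
motion `W` started at `0` independent of `X 0`, a random positive measure `μm` on `[0, ∞)`
finite on compact sets, and a random function `nv` such that a.s.
`X t = X 0 + W t + ∫_{[0,t]} nv s dμm`, `μm` is carried by the times when `X` is on the
boundary of `D`, and for `μm`-a.e. `s` the vector `nv s` is a unit inward normal vector of a
supporting hyperplane of `D` at `X s`. -/
def IsRBM {Ω' : Type*} [MeasurableSpace Ω'] (P : Measure Ω') {E : Type*}
    [NormedAddCommGroup E] [InnerProductSpace ℝ E] [MeasurableSpace E] [BorelSpace E]
    (D : Set E) (X : ℝ → Ω' → E) : Prop :=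
  (∀ t, Measurable (X t)) ∧
  (∀ᵐ ω ∂P, ContinuousOn (fun t : ℝ => X t ω) (Set.Ici 0) ∧
    ∀ t, 0 ≤ t → X t ω ∈ closure D) ∧
  ∃ (W : ℝ → Ω' → E) (μm : Ω' → Measure ℝ) (nv : Ω' → ℝ → E),
    IsStdBM P W ∧
    IndepFun (X 0) (fun ω => fun t => W t ω) P ∧
    (∀ ω, ∀ K : Set ℝ, IsCompact K → μm ω K < ⊤) ∧
    (∀ ω, μm ω (Set.Iio 0) = 0) ∧
    (∀ᵐ ω ∂P,
      (∀ t, 0 ≤ t → X t ω = X 0 ω + W t ω + ∫ s in Set.Icc 0 t, nv ω s ∂(μm ω)) ∧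
      μm ω {s | 0 ≤ s ∧ X s ω ∉ frontier D} = 0 ∧
      (∀ᵐ s ∂(μm ω), ‖nv ω s‖ = 1 ∧
        D ⊆ {y | 0 ≤ (inner ℝ (nv ω s) (y - X s ω) : ℝ)}))

/-- The uniform probability measure `σ` on `D`. -/
noncomputable def unifOn {E : Type*} [MeasureSpace E] (D : Set E) : Measure E :=
  (volume D)⁻¹ • volume.restrict D

/-!
Subtracting the two equations eliminates the Brownian motion: pathwise, `Z = X - X'` is the
difference `∫_{[0,t]} 𝐧 dμ - ∫_{[0,t]} 𝐧' dμ'` of the two reflection terms, a path of bounded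
variation. Its jumps vanish (by continuity of `X` and `X'` at positive times, and by the
supporting-hyperplane conditions at time `0`), so integration by parts for such paths gives
`‖Z_T‖² = 2 ∫_{[0,T]} ⟪𝐧, Z⟫ dμ - 2 ∫_{[0,T]} ⟪𝐧', Z⟫ dμ'`. Since `X'` stays in `Ω̄`, which lies
on the inner side of every supporting hyperplane at `X`, the first integrand is `≤ 0`, and
symmetrically the second is `≥ 0`; hence `Z_T = 0`.
The Brownian motion matters only through a junk value: a reflection term whose integrand is not
integrable is `0`, which would leave `x + W` in the bounded set `Ω̄` forever, and almost surely
Brownian motion does not stay bounded.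
-/

open Filter Set Topology
open scoped RealInnerProductSpace

section IntegrationByParts

variable {E : Type*} [NormedAddCommGroup E] [InnerProductSpace ℝ E]
  {m₁ m₂ : Measure ℝ} {g h : ℝ → E}

theorem setIntegral_le_add_setIntegral_ge {G : Type*} [NormedAddCommGroup G] [NormedSpace ℝ G]
    {μ : Measure (ℝ × ℝ)} {F : ℝ × ℝ → G} (hF : Integrable F μ) :
    ∫ p in {p | p.2 ≤ p.1}, F p ∂μ + ∫ p in {p | p.1 ≤ p.2}, F p ∂μ
      = ∫ p, F p ∂μ + ∫ p in {p | p.1 ≤ p.2} ∩ {p | p.2 ≤ p.1}, F p ∂μ := by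
  have hle : MeasurableSet {p : ℝ × ℝ | p.2 ≤ p.1} :=
    measurableSet_le measurable_snd measurable_fst
  have hdiff : {p : ℝ × ℝ | p.1 ≤ p.2} \ {p | p.2 ≤ p.1} = {p | p.2 ≤ p.1}ᶜ := by
    ext p
    simpa using le_of_lt
  have hT := integral_inter_add_sdiff (s := {p : ℝ × ℝ | p.1 ≤ p.2}) hle hF.integrableOn
  rw [← integral_add_compl hle hF, ← hT, hdiff]
  abel

theorem integrable_inner_prod (hg : Integrable g m₁) (hh : Integrable h m₂) :
    Integrable (fun p : ℝ × ℝ => ⟪h p.1, g p.2⟫) (m₂.prod m₁) :=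
  hh.op_fst_snd (op := fun a b : E => ⟪a, b⟫) (continuous_inner (𝕜 := ℝ))
    ⟨1, fun a b => by simpa using norm_inner_le_norm (𝕜 := ℝ) a b⟩ hg

theorem integral_indicator_le_slice [CompleteSpace E] (hg : Integrable g m₁) (v : ℝ) :
    ∫ u, {p : ℝ × ℝ | p.2 ≤ p.1}.indicator (fun p => ⟪h p.1, g p.2⟫) (v, u) ∂m₁
      = ⟪h v, ∫ u in Iic v, g u ∂m₁⟫ := by
  rw [← integral_inner hg.integrableOn, ← integral_indicator measurableSet_Iic]
  rfl

theorem integrable_inner_setIntegral_Iic [CompleteSpace E] [SFinite m₁]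
    (hg : Integrable g m₁) (hh : Integrable h m₂) :
    Integrable (fun v => ⟪h v, ∫ u in Iic v, g u ∂m₁⟫) m₂ := by
  simpa only [integral_indicator_le_slice hg] using
    ((integrable_inner_prod hg hh).indicator
      (measurableSet_le measurable_snd measurable_fst)).integral_prod_left

theorem integral_inner_setIntegral_Iic [CompleteSpace E] [SFinite m₁] [SFinite m₂]
    (hg : Integrable g m₁) (hh : Integrable h m₂) :
    ∫ v, ⟪h v, ∫ u in Iic v, g u ∂m₁⟫ ∂m₂
      = ∫ p in {p : ℝ × ℝ | p.2 ≤ p.1}, ⟪h p.1, g p.2⟫ ∂(m₂.prod m₁) := by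
  have hS : MeasurableSet {p : ℝ × ℝ | p.2 ≤ p.1} :=
    measurableSet_le measurable_snd measurable_fst
  rw [← integral_indicator hS, integral_prod _ ((integrable_inner_prod hg hh).indicator hS)]
  simp only [integral_indicator_le_slice hg]

theorem setIntegral_diagonal_inner [SFinite m₁] [SFinite m₂]
    (hg : Integrable g m₁) (hh : Integrable h m₂) :
    ∫ p in {p : ℝ × ℝ | p.1 ≤ p.2} ∩ {p | p.2 ≤ p.1}, ⟪h p.1, g p.2⟫ ∂(m₂.prod m₁)
      = ∫ v, m₁.real {v} * ⟪h v, g v⟫ ∂m₂ := by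
  have hD : MeasurableSet ({p : ℝ × ℝ | p.1 ≤ p.2} ∩ {p | p.2 ≤ p.1}) :=
    (measurableSet_le measurable_fst measurable_snd).inter
      (measurableSet_le measurable_snd measurable_fst)
  rw [← integral_indicator hD, integral_prod _ ((integrable_inner_prod hg hh).indicator hD)]
  refine integral_congr_ae (Eventually.of_forall fun v => ?_)
  change ∫ u, (Icc v v).indicator (fun u => ⟪h v, g u⟫) u ∂m₁ = _
  rw [integral_indicator measurableSet_Icc, Icc_self, integral_singleton, smul_eq_mul]

theorem integral_inner_setIntegral_Iic_add_swap [CompleteSpace E] [SFinite m₁] [SFinite m₂]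
    (hg : Integrable g m₁) (hh : Integrable h m₂) :
    ∫ v, ⟪h v, ∫ u in Iic v, g u ∂m₁⟫ ∂m₂ + ∫ u, ⟪g u, ∫ v in Iic u, h v ∂m₂⟫ ∂m₁
      = ⟪∫ v, h v ∂m₂, ∫ u, g u ∂m₁⟫ + ∫ v, m₁.real {v} * ⟪h v, g v⟫ ∂m₂ := by
  have hswap : ∫ p in {p : ℝ × ℝ | p.2 ≤ p.1}, ⟪g p.1, h p.2⟫ ∂(m₁.prod m₂)
      = ∫ p in {p : ℝ × ℝ | p.1 ≤ p.2}, ⟪h p.1, g p.2⟫ ∂(m₂.prod m₁) := by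
    rw [← integral_indicator (measurableSet_le measurable_snd measurable_fst),
      ← integral_indicator (measurableSet_le measurable_fst measurable_snd),
      ← integral_prod_swap]
    congr 1
    ext p
    simp [indicator, real_inner_comm]
  rw [integral_inner_setIntegral_Iic hg hh, integral_inner_setIntegral_Iic hh hg, hswap,
    setIntegral_le_add_setIntegral_ge (integrable_inner_prod hg hh),
    setIntegral_diagonal_inner hg hh]
  congr 1
  exact integral_prod_bilin (innerSL ℝ) hh hg

theorem integral_eq_of_jump_eq_of_inner_sign [CompleteSpace E] {ν ρ : Measure ℝ}
    [SFinite ν] [SFinite ρ] {f : ℝ → E} (hf : Integrable f ν) (hg : Integrable g ρ)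
    (hjump : ∀ s, ν.real {s} • f s = ρ.real {s} • g s)
    (hf_sign : ∀ᵐ v ∂ν, ⟪f v, (∫ u in Iic v, f u ∂ν) - ∫ u in Iic v, g u ∂ρ⟫ ≤ 0)
    (hg_sign : ∀ᵐ v ∂ρ, 0 ≤ ⟪g v, (∫ u in Iic v, f u ∂ν) - ∫ u in Iic v, g u ∂ρ⟫) :
    ∫ u, f u ∂ν = ∫ u, g u ∂ρ := by
  have hf_int :
      ∫ v, ⟪f v, ∫ u in Iic v, f u ∂ν⟫ ∂ν - ∫ v, ⟪f v, ∫ u in Iic v, g u ∂ρ⟫ ∂ν ≤ 0 := by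
    rw [← integral_sub (integrable_inner_setIntegral_Iic hf hf)
      (integrable_inner_setIntegral_Iic hg hf)]
    exact integral_nonpos_of_ae (hf_sign.mono fun v hv => by rwa [inner_sub_right] at hv)
  have hg_int :
      0 ≤ ∫ v, ⟪g v, ∫ u in Iic v, f u ∂ν⟫ ∂ρ - ∫ v, ⟪g v, ∫ u in Iic v, g u ∂ρ⟫ ∂ρ := by
    rw [← integral_sub (integrable_inner_setIntegral_Iic hf hg)
      (integrable_inner_setIntegral_Iic hg hg)]
    exact integral_nonneg_of_ae (hg_sign.mono fun v hv => by rwa [inner_sub_right] at hv)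
  -- equal jumps make the diagonal terms of the four integration-by-parts identities cancel
  have hjump_inner : ∀ k s, ν.real {s} * ⟪k, f s⟫ = ρ.real {s} * ⟪k, g s⟫ := fun k s => by
    rw [← real_inner_smul_right, hjump, real_inner_smul_right]
  have hdiag_f : ∫ v, ν.real {v} * ⟪f v, f v⟫ ∂ν = ∫ v, ρ.real {v} * ⟪f v, g v⟫ ∂ν :=
    integral_congr_ae (Eventually.of_forall fun v => hjump_inner (f v) v)
  have hdiag_g : ∫ v, ν.real {v} * ⟪g v, f v⟫ ∂ρ = ∫ v, ρ.real {v} * ⟪g v, g v⟫ ∂ρ :=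
    integral_congr_ae (Eventually.of_forall fun v => hjump_inner (g v) v)
  have hνν := integral_inner_setIntegral_Iic_add_swap hf hf
  have hνρ := integral_inner_setIntegral_Iic_add_swap hf hg
  have hρν := integral_inner_setIntegral_Iic_add_swap hg hf
  have hρρ := integral_inner_setIntegral_Iic_add_swap hg hg
  have hnonpos : ⟪(∫ u, f u ∂ν) - ∫ u, g u ∂ρ, (∫ u, f u ∂ν) - ∫ u, g u ∂ρ⟫ ≤ 0 := by
    rw [inner_sub_sub_self]
    linarith
  exact sub_eq_zero.mp (real_inner_self_nonpos.mp hnonpos)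

end IntegrationByParts

section Skorokhod

theorem measureReal_singleton_mul_nonneg {α : Type*} [MeasurableSpace α] {ν : Measure α}
    {ψ : α → ℝ} (h : ∀ᵐ s ∂ν, 0 ≤ ψ s) (a : α) : 0 ≤ ν.real {a} * ψ a := by
  rcases eq_or_ne (ν {a}) 0 with ha | ha
  · simp [Measure.real, ha]
  · exact mul_nonneg measureReal_nonneg
      (by_contra fun hψ => ha (measure_mono_null (singleton_subset_iff.2 hψ) h))

variable {E : Type*} [NormedAddCommGroup E] [InnerProductSpace ℝ E]
  {μ μ' : Measure ℝ} {n n' w y y' φ : ℝ → E}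

theorem inner_sub_nonneg_of_mem_closure {D : Set E} {a z : E} (hD : D ⊆ {y | 0 ≤ ⟪a, y - z⟫})
    {p : E} (hp : p ∈ closure D) : 0 ≤ ⟪a, p - z⟫ :=
  closure_minimal hD (isClosed_le continuous_const (by fun_prop)) hp

theorem setIntegral_Icc_eq_add_Ioc {a b c : ℝ} (hab : a ≤ b) (hbc : b ≤ c)
    (hφ : IntegrableOn φ (Icc a c) μ) :
    ∫ r in Icc a c, φ r ∂μ = ∫ r in Icc a b, φ r ∂μ + ∫ r in Ioc b c, φ r ∂μ := by
  rw [← Icc_union_Ioc_eq_Icc hab hbc] at hφ ⊢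
  exact setIntegral_union ((Iic_disjoint_Ioc le_rfl).mono_left Icc_subset_Iic_self)
    measurableSet_Ioc (hφ.mono_set subset_union_left) (hφ.mono_set subset_union_right)

theorem tendsto_setIntegral_Ioc_nhdsLT [CompleteSpace E] {a s : ℝ}
    (hφ : IntegrableOn φ (Ioc a s) μ) (has : a < s) :
    Tendsto (fun u => ∫ r in Ioc u s, φ r ∂μ) (𝓝[<] s) (𝓝 (μ.real {s} • φ s)) := by
  rw [← integral_singleton]
  simp only [← integral_indicator measurableSet_Ioc,
    ← integral_indicator (measurableSet_singleton s)]
  have hsub : ∀ᶠ u in 𝓝[<] s, Ioc u s ⊆ Ioc a s :=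
    eventually_of_mem (Ioo_mem_nhdsLT has) fun u hu => Ioc_subset_Ioc_left hu.1.le
  refine tendsto_integral_filter_of_dominated_convergence ((Ioc a s).indicator (‖φ ·‖))
    (hsub.mono fun u hu => ((hφ.mono_set hu).integrable_indicator measurableSet_Ioc).1)
    (hsub.mono fun u hu => Eventually.of_forall fun r => ?_)
    (IntegrableOn.integrable_indicator hφ.norm measurableSet_Ioc)
    (Eventually.of_forall fun r => ?_)
  · rw [norm_indicator_eq_indicator_norm]
    exact indicator_le_indicator_of_subset hu (fun _ => norm_nonneg _) r
  · rcases lt_trichotomy r s with hrs | rfl | hsr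
    · rw [indicator_of_notMem (by simpa using hrs.ne)]
      refine tendsto_const_nhds.congr' (eventually_of_mem (Ioo_mem_nhdsLT hrs) fun u hu => ?_)
      exact (indicator_of_notMem (fun hr => hu.1.not_gt hr.1) φ).symm
    · rw [indicator_of_mem (mem_singleton r)]
      refine tendsto_const_nhds.congr' (eventually_mem_nhdsWithin.mono fun u hu => ?_)
      exact (indicator_of_mem (mem_Ioc.2 ⟨hu, le_rfl⟩) φ).symm
    · simp [indicator_of_notMem (fun hr : r ∈ Ioc _ s => hsr.not_ge hr.2), hsr.ne']

theorem reflection_jump_eq_of_pos [CompleteSpace E] {s : ℝ} (hs : 0 < s)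
    (hyc : ContinuousOn y (Ici 0)) (hy'c : ContinuousOn y' (Ici 0))
    (hn : IntegrableOn n (Icc 0 s) μ) (hn' : IntegrableOn n' (Icc 0 s) μ')
    (hy : ∀ t, 0 ≤ t → y t = w t + ∫ r in Icc 0 t, n r ∂μ)
    (hy' : ∀ t, 0 ≤ t → y' t = w t + ∫ r in Icc 0 t, n' r ∂μ') :
    μ.real {s} • n s = μ'.real {s} • n' s := by
  have hincr : ∀ᶠ u in 𝓝[<] s, (∫ r in Ioc u s, n r ∂μ) - ∫ r in Ioc u s, n' r ∂μ'
      = (y s - y' s) - (y u - y' u) := by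
    filter_upwards [Ioo_mem_nhdsLT hs] with u hu
    rw [hy s hs.le, hy' s hs.le, hy u hu.1.le, hy' u hu.1.le,
      setIntegral_Icc_eq_add_Ioc hu.1.le hu.2.le hn,
      setIntegral_Icc_eq_add_Ioc hu.1.le hu.2.le hn']
    abel
  have hcont : ContinuousAt (fun t => y t - y' t) s :=
    (hyc.sub hy'c).continuousAt (Ici_mem_nhds hs)
  have hincr_lim : Tendsto (fun u => (y s - y' s) - (y u - y' u)) (𝓝[<] s) (𝓝 0) := by
    simpa using (tendsto_const_nhds (x := y s - y' s)).sub
      (tendsto_nhdsWithin_of_tendsto_nhds (s := Iio s) hcont.tendsto)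
  have hjump_lim := ((tendsto_setIntegral_Ioc_nhdsLT (hn.mono_set Ioc_subset_Icc_self) hs).sub
    (tendsto_setIntegral_Ioc_nhdsLT (hn'.mono_set Ioc_subset_Icc_self) hs)).congr' hincr
  exact sub_eq_zero.1 (tendsto_nhds_unique hjump_lim hincr_lim)

theorem reflection_jump_eq_at_zero [CompleteSpace E]
    (hy : ∀ t, 0 ≤ t → y t = w t + ∫ r in Icc 0 t, n r ∂μ)
    (hy' : ∀ t, 0 ≤ t → y' t = w t + ∫ r in Icc 0 t, n' r ∂μ')
    (hn_sign : ∀ᵐ s ∂μ, 0 ≤ ⟪n s, y' s - y s⟫)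
    (hn'_sign : ∀ᵐ s ∂μ', 0 ≤ ⟪n' s, y s - y' s⟫) :
    μ.real {0} • n 0 = μ'.real {0} • n' 0 := by
  have hd : y 0 - y' 0 = μ.real {0} • n 0 - μ'.real {0} • n' 0 := by
    rw [hy 0 le_rfl, hy' 0 le_rfl, Icc_self, integral_singleton, integral_singleton]
    abel
  have h := measureReal_singleton_mul_nonneg hn_sign 0
  have h' := measureReal_singleton_mul_nonneg hn'_sign 0
  have hnonpos : ⟪y 0 - y' 0, y 0 - y' 0⟫ ≤ 0 := by
    nth_rewrite 1 [hd]
    simp only [inner_sub_left, inner_sub_right, real_inner_smul_left, mul_sub] at h h' ⊢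
    linarith
  rw [← sub_eq_zero, ← hd]
  exact real_inner_self_nonpos.1 hnonpos

theorem skorokhod_problem_unique [CompleteSpace E]
    [IsFiniteMeasureOnCompacts μ] [IsFiniteMeasureOnCompacts μ']
    (hyc : ContinuousOn y (Ici 0)) (hy'c : ContinuousOn y' (Ici 0))
    (hn : ∀ T, IntegrableOn n (Icc 0 T) μ) (hn' : ∀ T, IntegrableOn n' (Icc 0 T) μ')
    (hy : ∀ t, 0 ≤ t → y t = w t + ∫ r in Icc 0 t, n r ∂μ)
    (hy' : ∀ t, 0 ≤ t → y' t = w t + ∫ r in Icc 0 t, n' r ∂μ')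
    (hn_sign : ∀ᵐ s ∂μ, 0 ≤ ⟪n s, y' s - y s⟫)
    (hn'_sign : ∀ᵐ s ∂μ', 0 ≤ ⟪n' s, y s - y' s⟫) :
    ∀ t, 0 ≤ t → y t = y' t := by
  intro T hT
  have hjump : ∀ s, 0 ≤ s → μ.real {s} • n s = μ'.real {s} • n' s := fun s hs =>
    hs.eq_or_lt.elim (fun h => h ▸ reflection_jump_eq_at_zero hy hy' hn_sign hn'_sign)
      (fun h => reflection_jump_eq_of_pos h hyc hy'c (hn s) (hn' s) hy hy')
  set ν := μ.restrict (Icc 0 T)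
  set ρ := μ'.restrict (Icc 0 T)
  have hνρ_jump : ∀ s, ν.real {s} • n s = ρ.real {s} • n' s := by
    intro s
    by_cases hs : s ∈ Icc 0 T
    · simpa only [ν, ρ, measureReal_restrict_apply (measurableSet_singleton s),
        singleton_inter_of_mem hs] using hjump s hs.1
    · simp [ν, ρ, measureReal_restrict_apply (measurableSet_singleton s),
        singleton_inter_of_notMem hs]
  have hrunning : ∀ v ∈ Icc 0 T,
      (∫ u in Iic v, n u ∂ν) - ∫ u in Iic v, n' u ∂ρ = y v - y' v := by
    intro v hv
    have hIcc : Iic v ∩ Icc 0 T = Icc 0 v := by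
      ext u
      simp only [mem_inter_iff, mem_Iic, mem_Icc]
      exact ⟨fun h => ⟨h.2.1, h.1⟩, fun h => ⟨h.2, h.1, h.2.trans hv.2⟩⟩
    rw [Measure.restrict_restrict measurableSet_Iic, Measure.restrict_restrict measurableSet_Iic,
      hIcc, hy v hv.1, hy' v hv.1]
    abel
  have hsign : ∀ᵐ v ∂ν, ⟪n v, (∫ u in Iic v, n u ∂ν) - ∫ u in Iic v, n' u ∂ρ⟫ ≤ 0 := by
    filter_upwards [ae_restrict_mem measurableSet_Icc, ae_restrict_of_ae hn_sign] with v hv hnv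
    rw [hrunning v hv, ← neg_sub, inner_neg_right]
    exact neg_nonpos.2 hnv
  have hsign' : ∀ᵐ v ∂ρ, 0 ≤ ⟪n' v, (∫ u in Iic v, n u ∂ν) - ∫ u in Iic v, n' u ∂ρ⟫ := by
    filter_upwards [ae_restrict_mem measurableSet_Icc, ae_restrict_of_ae hn'_sign] with v hv hnv
    rwa [hrunning v hv]
  rw [hy T hT, hy' T hT,
    integral_eq_of_jump_eq_of_inner_sign (hn T) (hn' T) hνρ_jump hsign hsign']

end Skorokhod

theorem integrableOn_Icc_of_norm_le {E : Type*} [NormedAddCommGroup E] [NormedSpace ℝ E]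
    {μ : Measure ℝ} {n w y : ℝ → E} {R : ℝ}
    (hy : ∀ t, 0 ≤ t → y t = w t + ∫ r in Icc 0 t, n r ∂μ) (hyR : ∀ t, 0 ≤ t → ‖y t‖ ≤ R)
    (hw : ∀ r, ∃ᶠ t in atTop, r < ‖w t‖) (T : ℝ) : IntegrableOn n (Icc 0 T) μ := by
  by_contra hT
  refine hw R (eventually_atTop.2 ⟨max T 0, fun t ht => not_lt.2 ?_⟩)
  have ht' : ¬ IntegrableOn n (Icc 0 t) μ :=
    fun h => hT (h.mono_set (Icc_subset_Icc_right (le_of_max_le_left ht)))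
  -- a non-integrable reflection term is the junk value `0`, so `y = w` from time `T` on
  simpa [hy t (le_of_max_le_right ht), integral_undef ht'] using hyR t (le_of_max_le_right ht)

section BrownianMotion

variable {Ω : Type*} [MeasurableSpace Ω] {P : Measure Ω}
  {E : Type*} [NormedAddCommGroup E] [InnerProductSpace ℝ E] [MeasurableSpace E] [BorelSpace E]
  {W : ℝ → Ω → E}

theorem gaussianReal_Ioi_ne_zero (c : ℝ) : gaussianReal 0 1 (Ioi c) ≠ 0 := fun h => by
  simpa using gaussianReal_absolutelyContinuous' 0 one_ne_zero h

theorem IsStdBM.measurable_inner_sub (hW : IsStdBM P W) (v : E) (s t : ℝ) :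
    Measurable fun ω => ⟪v, W t ω - W s ω⟫ := by
  have hv : Measurable fun z : E => ⟪v, z⟫ := (continuous_const.inner continuous_id).measurable
  simp_rw [inner_sub_right]
  exact (hv.comp (hW.1 t)).sub (hv.comp (hW.1 s))

theorem IsStdBM.frequently_lt_norm_sub [Nontrivial E] (hW : IsStdBM P W) (c : ℝ) :
    ∀ᵐ ω ∂P, ∃ᶠ k : ℕ in atTop, c < ‖W (k + 1 : ℕ) ω - W k ω‖ := by
  obtain ⟨v, hv⟩ := exists_norm_eq E zero_le_one
  set A : ℕ → Set Ω := fun k => (fun ω => W (k + 1 : ℕ) ω - W k ω) ⁻¹' {z | c < ⟪v, z⟫}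
  have hA_meas : ∀ k, MeasurableSet (A k) := fun k =>
    measurableSet_lt measurable_const (hW.measurable_inner_sub v _ _)
  have hA_indep : iIndepSet A P := (iIndepSet_iff_meas_biInter hA_meas).2 fun S =>
    (hW.2.2.2.2 _ Nat.mono_cast (Nat.cast_nonneg 0)).meas_biInter fun k _ =>
      ⟨_, measurableSet_lt measurable_const
        (continuous_const.inner continuous_id).measurable, rfl⟩
  have hA_prob : ∀ k, P (A k) = gaussianReal 0 1 (Ioi c) := by
    intro k
    have hlaw := hW.2.2.2.1 k (k + 1 : ℕ) k.cast_nonneg (by simp) v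
    rw [show (((k + 1 : ℕ) : ℝ) - k) * ‖v‖ ^ 2 = 1 by simp [hv], toNNReal_one] at hlaw
    rw [← hlaw, Measure.map_apply (hW.measurable_inner_sub v _ _) measurableSet_Ioi]
    rfl
  have hsum : ∑' k, P (A k) = ⊤ := by
    simp only [hA_prob]
    exact ENNReal.tsum_const_eq_top_of_ne_zero (gaussianReal_Ioi_ne_zero c)
  have := hA_indep.isProbabilityMeasure
  have hlimsup := measure_limsup_eq_one hA_meas hA_indep hsum
  rw [← prob_compl_eq_zero_iff (MeasurableSet.measurableSet_limsup hA_meas)] at hlimsup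
  refine (measure_eq_zero_iff_ae_notMem.1 hlimsup).mono fun ω hω => ?_
  refine (mem_limsup_iff_frequently_mem.1 (not_not.1 hω)).mono fun k (hk : c < ⟪v, _⟫) => ?_
  simpa [hv] using hk.trans_le (real_inner_le_norm _ _)

theorem IsStdBM.frequently_lt_norm [Nontrivial E] (hW : IsStdBM P W) :
    ∀ᵐ ω ∂P, ∀ r : ℝ, ∃ᶠ t in atTop, r < ‖W t ω‖ := by
  filter_upwards [ae_all_iff.2 fun N : ℕ => hW.frequently_lt_norm_sub (2 * N)]
    with ω hω r hbdd
  obtain ⟨N, hN⟩ := exists_nat_ge r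
  simp only [not_lt] at hbdd
  refine hω N ?_
  filter_upwards [tendsto_natCast_atTop_atTop.eventually hbdd,
    (tendsto_natCast_atTop_atTop.comp (tendsto_add_atTop_nat 1)).eventually hbdd] with k hk hk1
  rw [not_lt]
  calc ‖W (k + 1 : ℕ) ω - W k ω‖ ≤ ‖W (k + 1 : ℕ) ω‖ + ‖W k ω‖ := norm_sub_le _ _
    _ ≤ 2 * N := by simp only [Function.comp] at hk1; linarith

end BrownianMotion

theorem tanaka_pathwise_uniqueness_general
    {n : ℕ} (hn : 1 ≤ n) (D : Set (EuclideanSpace ℝ (Fin n)))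
    (hDb : Bornology.IsBounded D)
    {Ω' : Type*} [MeasurableSpace Ω'] (P : Measure Ω')
    (W : ℝ → Ω' → EuclideanSpace ℝ (Fin n)) (hW : IsStdBM P W)
    (x : EuclideanSpace ℝ (Fin n))
    (X X' : ℝ → Ω' → EuclideanSpace ℝ (Fin n))
    (μm μm' : Ω' → Measure ℝ) (nv nv' : Ω' → ℝ → EuclideanSpace ℝ (Fin n))
    (hXcont : ∀ᵐ ω ∂P, ContinuousOn (fun t : ℝ => X t ω) (Set.Ici 0) ∧
      ∀ t, 0 ≤ t → X t ω ∈ closure D)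
    (hX'cont : ∀ᵐ ω ∂P, ContinuousOn (fun t : ℝ => X' t ω) (Set.Ici 0) ∧
      ∀ t, 0 ≤ t → X' t ω ∈ closure D)
    (hμm : ∀ ω, (∀ K : Set ℝ, IsCompact K → μm ω K < ⊤) ∧ μm ω (Set.Iio 0) = 0)
    (hμm' : ∀ ω, (∀ K : Set ℝ, IsCompact K → μm' ω K < ⊤) ∧ μm' ω (Set.Iio 0) = 0)
    (hX : ∀ᵐ ω ∂P,
      (∀ t, 0 ≤ t → X t ω = x + W t ω + ∫ s in Set.Icc 0 t, nv ω s ∂(μm ω)) ∧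
      μm ω {s | 0 ≤ s ∧ X s ω ∉ frontier D} = 0 ∧
      (∀ᵐ s ∂(μm ω), ‖nv ω s‖ = 1 ∧
        D ⊆ {y | 0 ≤ (inner ℝ (nv ω s) (y - X s ω) : ℝ)}))
    (hX' : ∀ᵐ ω ∂P,
      (∀ t, 0 ≤ t → X' t ω = x + W t ω + ∫ s in Set.Icc 0 t, nv' ω s ∂(μm' ω)) ∧
      μm' ω {s | 0 ≤ s ∧ X' s ω ∉ frontier D} = 0 ∧
      (∀ᵐ s ∂(μm' ω), ‖nv' ω s‖ = 1 ∧
        D ⊆ {y | 0 ≤ (inner ℝ (nv' ω s) (y - X' s ω) : ℝ)})) :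
    ∀ᵐ ω ∂P, ∀ t, 0 ≤ t → X t ω = X' t ω := by
  have : Nonempty (Fin n) := ⟨⟨0, hn⟩⟩
  obtain ⟨R, hR⟩ := hDb.closure.exists_norm_le
  filter_upwards [hXcont, hX'cont, hX, hX', hW.frequently_lt_norm]
    with ω ⟨hXc, hXD⟩ ⟨hX'c, hX'D⟩ ⟨hXeq, _, hXn⟩ ⟨hX'eq, _, hX'n⟩ hWω
  have : IsFiniteMeasureOnCompacts (μm ω) := ⟨(hμm ω).1⟩
  have : IsFiniteMeasureOnCompacts (μm' ω) := ⟨(hμm' ω).1⟩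
  have hw : ∀ r, ∃ᶠ t in atTop, r < ‖x + W t ω‖ := fun r =>
    (hWω (r + ‖x‖)).mono fun t ht => by
      rw [add_comm]
      linarith [norm_le_add_norm_add (W t ω) x]
  have hnonneg : ∀ {ν : Measure ℝ}, ν (Iio 0) = 0 → ∀ᵐ s ∂ν, 0 ≤ s := fun h =>
    (measure_eq_zero_iff_ae_notMem.1 h).mono fun s hs => not_lt.1 hs
  refine skorokhod_problem_unique hXc hX'c
    (integrableOn_Icc_of_norm_le hXeq (fun t ht => hR _ (hXD t ht)) hw)
    (integrableOn_Icc_of_norm_le hX'eq (fun t ht => hR _ (hX'D t ht)) hw) hXeq hX'eq ?_ ?_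
  · filter_upwards [hXn, hnonneg (hμm ω).2] with s hs hs0
    exact inner_sub_nonneg_of_mem_closure hs.2 (hX'D s hs0)
  · filter_upwards [hX'n, hnonneg (hμm' ω).2] with s hs hs0
    exact inner_sub_nonneg_of_mem_closure hs.2 (hXD s hs0)

theorem tanaka_pathwise_uniqueness
    {n : ℕ} (hn : 1 ≤ n) (D : Set (EuclideanSpace ℝ (Fin n)))
    (hDb : Bornology.IsBounded D) (hDo : IsOpen D) (hDc : Convex ℝ D)
    {Ω' : Type*} [MeasurableSpace Ω'] (P : Measure Ω') [IsProbabilityMeasure P]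
    (W : ℝ → Ω' → EuclideanSpace ℝ (Fin n)) (hW : IsStdBM P W)
    (x : EuclideanSpace ℝ (Fin n)) (hx : x ∈ closure D)
    (X X' : ℝ → Ω' → EuclideanSpace ℝ (Fin n))
    (μm μm' : Ω' → Measure ℝ) (nv nv' : Ω' → ℝ → EuclideanSpace ℝ (Fin n))
    (hXcont : ∀ᵐ ω ∂P, ContinuousOn (fun t : ℝ => X t ω) (Set.Ici 0) ∧
      ∀ t, 0 ≤ t → X t ω ∈ closure D)
    (hX'cont : ∀ᵐ ω ∂P, ContinuousOn (fun t : ℝ => X' t ω) (Set.Ici 0) ∧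
      ∀ t, 0 ≤ t → X' t ω ∈ closure D)
    (hμm : ∀ ω, (∀ K : Set ℝ, IsCompact K → μm ω K < ⊤) ∧ μm ω (Set.Iio 0) = 0)
    (hμm' : ∀ ω, (∀ K : Set ℝ, IsCompact K → μm' ω K < ⊤) ∧ μm' ω (Set.Iio 0) = 0)
    (hX : ∀ᵐ ω ∂P,
      (∀ t, 0 ≤ t → X t ω = x + W t ω + ∫ s in Set.Icc 0 t, nv ω s ∂(μm ω)) ∧
      μm ω {s | 0 ≤ s ∧ X s ω ∉ frontier D} = 0 ∧
      (∀ᵐ s ∂(μm ω), ‖nv ω s‖ = 1 ∧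
        D ⊆ {y | 0 ≤ (inner ℝ (nv ω s) (y - X s ω) : ℝ)}))
    (hX' : ∀ᵐ ω ∂P,
      (∀ t, 0 ≤ t → X' t ω = x + W t ω + ∫ s in Set.Icc 0 t, nv' ω s ∂(μm' ω)) ∧
      μm' ω {s | 0 ≤ s ∧ X' s ω ∉ frontier D} = 0 ∧
      (∀ᵐ s ∂(μm' ω), ‖nv' ω s‖ = 1 ∧
        D ⊆ {y | 0 ≤ (inner ℝ (nv' ω s) (y - X' s ω) : ℝ)})) :
    ∀ᵐ ω ∂P, ∀ t, 0 ≤ t → X t ω = X' t ω :=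
  tanaka_pathwise_uniqueness_general hn D hDb P W hW x X X' μm μm' nv nv' hXcont hX'cont hμm hμm' hX
    hX'
end

section
/- For every d > 0, t > 0, and k ∈ [−d,d], F_d(t,k) ≤ F_d(t,0); equivalently, sup_{k ∈ [−d,d]} F_d(t,k) = F_d(t,0). -/
/-!
With `c = π²t/(8d²)` and `z = πk/(2d) + π/2`, `F_d(t, k)` is `4/π` times
`∑ₙ e^{-c(2n+1)²} sin((2n+1)z)/(2n+1)`, which is symmetric about `z = π/2` and whose
`z`-derivative is the odd theta series `∑ₙ e^{-c(2n+1)²} cos((2n+1)z)`. So it suffices that this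
series is `≤ 0` for `z ∈ [π/2, π]`. For `c ≥ 1/4` its first term `e^{-c} cos z` dominates the
rest, since `|cos((2n+1)z)| ≤ (2n+1)|cos z|`. For `c ≤ π²/8` Poisson summation turns it into a
positive multiple of the alternating Gaussian sum `∑_{n ∈ ℤ} (-1)ⁿ e^{-α(n+u)²}` with
`α = π²/(4c) ≥ 2` and `u = z/π ∈ [1/2, 1]`, whose terms can be grouped in fours with
nonpositive sums.
-/

open MeasureTheory ProbabilityTheory Real

lemma summable_exp_neg_mul_int_add_sq {a : ℝ} (ha : 0 < a) (b : ℝ) :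
    Summable fun k : ℤ => exp (-a * (k + b) ^ 2) := by
  have hθ := ((summable_jacobiTheta₂_term_iff ((a * b / π : ℝ) * Complex.I)
    ((a / π : ℝ) * Complex.I)).2 (by simp; positivity)).norm.mul_left (exp (-a * b ^ 2))
  refine hθ.congr fun k => ?_
  rw [norm_jacobiTheta₂_term, Complex.mul_I_im, Complex.mul_I_im, Complex.ofReal_re,
    Complex.ofReal_re, ← exp_add]
  congr 1
  field_simp
  ring

lemma summable_exp_neg_mul_odd_sq {c : ℝ} (hc : 0 < c) :
    Summable fun n : ℕ => exp (-c * (2 * n + 1) ^ 2) :=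
  ((summable_exp_neg_mul_int_add_sq (by positivity : 0 < 4 * c) (1 / 2)).comp_injective
    Nat.cast_injective).congr fun n => by simp only [Function.comp_apply, Int.cast_natCast]; ring_nf

lemma exp_neg_mul_sq_pair_le {α a b : ℝ} (hα : 2 ≤ α) (ha : 0 ≤ a) (hab : a ≤ b)
    (hab1 : 1 ≤ a + b) :
    exp (-α * (a + 1) ^ 2) + exp (-α * b ^ 2) ≤ exp (-α * a ^ 2) + exp (-α * (b + 1) ^ 2) := by
  have hα0 : 0 ≤ α := by linarith
  have hA' : 0 < exp (-α * (a + 1) ^ 2) := exp_pos _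
  have hA : 3 * exp (-α * (a + 1) ^ 2) ≤ exp (-α * a ^ 2) := by
    have hsplit : exp (-α * a ^ 2) = exp (-α * (a + 1) ^ 2) * exp (α * (2 * a + 1)) := by
      rw [← exp_add]; ring_nf
    have h3 : 3 ≤ exp (α * (2 * a + 1)) := by
      nlinarith [add_one_le_exp (α * (2 * a + 1)), mul_nonneg hα0 ha]
    rw [hsplit]
    nlinarith
  set z := exp (-(α * (b ^ 2 - a ^ 2)))
  have hz0 : 0 < z := exp_pos _
  have hz1 : z ≤ 1 :=
    exp_le_one_iff.2 (neg_nonpos.2 (mul_nonneg hα0 (by nlinarith)))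
  have hb : exp (-α * b ^ 2) = exp (-α * a ^ 2) * z := by rw [← exp_add]; ring_nf
  have hb1 : exp (-α * (a + 1) ^ 2) * z ^ 3 ≤ exp (-α * (b + 1) ^ 2) := by
    rw [← exp_nat_mul, ← exp_add, exp_le_exp]
    push_cast
    nlinarith [mul_nonneg (mul_nonneg hα0 (sub_nonneg.2 hab)) (sub_nonneg.2 hab1)]
  -- with `A = e^{-αa²}`, `A' = e^{-α(a+1)²}`: `A' (1 - z³) ≤ 3 A' (1 - z) ≤ A (1 - z)`
  nlinarith [mul_nonneg (sub_nonneg.2 hA) (sub_nonneg.2 hz1),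
    mul_nonneg hA'.le (mul_nonneg (sq_nonneg (1 - z)) (by linarith : 0 ≤ 2 + z))]

lemma tsum_neg_one_zpow_mul_exp_neg_mul_sq_nonpos {α u : ℝ} (hα : 2 ≤ α) (hu : 1 / 2 ≤ u)
    (hu1 : u ≤ 1) : ∑' n : ℤ, (-1 : ℝ) ^ n * exp (-α * (n + u) ^ 2) ≤ 0 := by
  set f : ℤ → ℝ := fun n => (-1 : ℝ) ^ n * exp (-α * (n + u) ^ 2)
  have hf : Summable f := by
    refine (summable_exp_neg_mul_int_add_sq (a := α) (by linarith) u).of_norm_bounded fun n => ?_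
    simp [f, norm_zpow]
  set t : ℕ → ℝ := fun n => f n + f (-(n + 1))
  have ht : Summable t := hf.nat_add_neg_add_one
  have he : Summable fun n => t (2 * n) := ht.comp_injective (mul_right_injective₀ two_ne_zero)
  have ho : Summable fun n => t (2 * n + 1) :=
    ht.comp_injective ((add_left_injective 1).comp (mul_right_injective₀ two_ne_zero))
  rw [← tsum_nat_add_neg_add_one hf, ← tsum_even_add_odd he ho, ← he.tsum_add ho]
  refine tsum_nonpos fun n => ?_
  have hpair := exp_neg_mul_sq_pair_le hα (a := 2 * n + 1 - u) (b := 2 * n + u)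
    (by linarith [n.cast_nonneg (α := ℝ)]) (by linarith) (by linarith [n.cast_nonneg (α := ℝ)])
  -- the terms `2n, -(2n+1), 2n+1, -(2n+2)` of the alternating sum
  simp only [t, f]
  push_cast
  rw [Even.neg_one_zpow ⟨n, by ring⟩, Odd.neg_one_zpow ⟨n, rfl⟩,
    Odd.neg_one_zpow ⟨-n - 1, by ring⟩, Even.neg_one_zpow ⟨-n - 1, by ring⟩,
    show (-(2 * n + 1) + u : ℝ) ^ 2 = (2 * n + 1 - u) ^ 2 by ring,
    show (-(2 * n + 1 + 1) + u : ℝ) ^ 2 = (2 * n + 1 - u + 1) ^ 2 by ring,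
    show (2 * n + 1 + u : ℝ) = 2 * n + u + 1 by ring]
  linarith

lemma tsum_exp_neg_mul_odd_sq_mul_cos {c : ℝ} (hc : 0 < c) (z : ℝ) :
    ∑' k : ℤ, exp (-c * (2 * k + 1) ^ 2) * cos ((2 * k + 1) * z) =
      √(π / (4 * c)) * ∑' n : ℤ, (-1 : ℝ) ^ n * exp (-(π ^ 2 / (4 * c)) * (n + z / π) ^ 2) := by
  have hc' : (c : ℂ) ≠ 0 := Complex.ofReal_ne_zero.2 hc.ne'
  set a : ℂ := ((4 * c / π : ℝ) : ℂ)
  set b : ℂ := -(2 * c + Complex.I * z) / π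
  have hJacobi := Complex.tsum_exp_neg_quadratic (a := a) (by simp [a]; positivity) b
  set g : ℤ → ℂ := fun k =>
    Complex.exp (((-c * (2 * k + 1) ^ 2 : ℝ) : ℂ) - (((2 * k + 1) * z : ℝ) : ℂ) * Complex.I)
  have hg : Summable g := by
    refine .of_norm <| (summable_exp_neg_mul_int_add_sq (a := 4 * c) (by positivity) (1 / 2)).congr
      fun k => ?_
    rw [Complex.norm_exp, Complex.sub_re, Complex.ofReal_re, Complex.mul_I_re, Complex.ofReal_im,
      neg_zero, sub_zero]
    ring_nf
  have hsum : ∑' k, g k = ((√(π / (4 * c)) *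
      ∑' n : ℤ, (-1 : ℝ) ^ n * exp (-(π ^ 2 / (4 * c)) * (n + z / π) ^ 2) : ℝ) : ℂ) := by
    calc ∑' k, g k = ∑' k : ℤ, Complex.exp (-c - z * Complex.I) *
          Complex.exp (-π * a * k ^ 2 + 2 * π * b * k) := by
          refine tsum_congr fun k => ?_
          rw [← Complex.exp_add]
          simp only [g, a, b]
          congr 1
          push_cast
          field_simp
          ring
      _ = 1 / a ^ (1 / 2 : ℂ) * ∑' n : ℤ, Complex.exp (-c - z * Complex.I) *
          Complex.exp (-π / a * (n + Complex.I * b) ^ 2) := by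
          rw [tsum_mul_left, hJacobi, tsum_mul_left]; ring
      _ = _ := by
          push_cast
          congr 1
          · have hsqrt : a ^ (1 / 2 : ℂ) = ((√(4 * c / π) : ℝ) : ℂ) := by
              rw [Real.sqrt_eq_rpow, Complex.ofReal_cpow (by positivity)]
              norm_num [a]
            rw [hsqrt, one_div, ← Complex.ofReal_inv, ← Real.sqrt_inv, inv_div]
          · refine tsum_congr fun n => ?_
            have hIb : Complex.I * b = (z - 2 * c * Complex.I) / π := by
              linear_combination (-z / π) * Complex.I_sq
            have hexp : -c - z * Complex.I + -π / a * (n + Complex.I * b) ^ 2 =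
                -(π ^ 2 / (4 * c)) * (n + z / π) ^ 2 + n * (π * Complex.I) := by
              rw [hIb]
              simp only [a]
              push_cast
              field_simp
              linear_combination (-4 * c ^ 2) * Complex.I_sq
            rw [← Complex.exp_add, hexp, Complex.exp_add, Complex.exp_int_mul, Complex.exp_pi_mul_I,
              mul_comm]
  rw [← Complex.ofReal_re (_ * _), ← hsum, Complex.re_tsum hg]
  refine tsum_congr fun k => ?_
  simp only [g, Complex.exp_re, Complex.sub_re, Complex.sub_im, Complex.ofReal_re,
    Complex.ofReal_im, Complex.mul_I_re, Complex.mul_I_im, neg_zero, sub_zero, zero_sub, cos_neg]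

lemma tsum_nonneg_of_abs_le_geometric {a : ℕ → ℝ} {q : ℝ} (ha : Summable a) (ha0 : 0 ≤ a 0)
    (hq0 : 0 ≤ q) (hq : q ≤ 1 / 2) (hbound : ∀ n, |a (n + 1)| ≤ a 0 * q ^ (n + 1)) :
    0 ≤ ∑' n, a n := by
  have hgeom : HasSum (fun n => a 0 * q ^ (n + 1)) (a 0 * (q * (1 - q)⁻¹)) := by
    simpa only [pow_succ', mul_assoc] using
      ((hasSum_geometric_of_lt_one hq0 (by linarith)).mul_left q).mul_left (a 0)
  have htail : -(a 0 * (q * (1 - q)⁻¹)) ≤ ∑' n, a (n + 1) :=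
    hasSum_le (fun n => neg_le_of_abs_le (hbound n)) hgeom.neg
      ((summable_nat_add_iff 1).2 ha).hasSum
  have hratio : q * (1 - q)⁻¹ ≤ 1 := by
    rw [← div_eq_mul_inv, div_le_one (by linarith)]; linarith
  rw [ha.tsum_eq_zero_add]
  nlinarith

lemma abs_sin_nat_mul_le (n : ℕ) (x : ℝ) : |sin (n * x)| ≤ n * |sin x| := by
  induction n with
  | zero => simp
  | succ n ih =>
    push_cast
    rw [add_mul, one_mul, sin_add]
    calc |sin (n * x) * cos x + cos (n * x) * sin x|
        ≤ |sin (n * x)| * |cos x| + |cos (n * x)| * |sin x| := by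
          simpa only [abs_mul] using abs_add_le (sin (n * x) * cos x) (cos (n * x) * sin x)
      _ ≤ n * |sin x| * 1 + 1 * |sin x| := by
          gcongr
          exacts [abs_cos_le_one _, abs_cos_le_one _]
      _ = (n + 1) * |sin x| := by ring

lemma abs_cos_odd_mul_le (n : ℕ) (z : ℝ) :
    |cos ((2 * n + 1) * z)| ≤ (2 * n + 1) * |cos z| := by
  have hz : cos z = -sin (z - π / 2) := by rw [← cos_add_pi_div_two, sub_add_cancel]
  have hodd : cos ((2 * n + 1) * z) = (-1) ^ n * -sin ((2 * n + 1) * (z - π / 2)) := by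
    rw [← cos_add_pi_div_two, ← cos_add_nat_mul_pi]; ring_nf
  rw [hodd, hz, abs_mul, abs_neg, abs_neg, abs_pow, abs_neg, abs_one, one_pow, one_mul]
  exact_mod_cast abs_sin_nat_mul_le (2 * n + 1) (z - π / 2)

lemma odd_mul_exp_neg_mul_odd_sq_le {c : ℝ} (hc : 0 ≤ c) (n : ℕ) :
    (2 * n + 1) * exp (-c * (2 * n + 1) ^ 2) ≤ exp (-c) * (3 * exp (-8 * c)) ^ n := by
  have hlin : (2 * n + 1 : ℝ) ≤ 3 ^ n := by
    have := one_add_mul_le_pow (a := (2 : ℝ)) (by norm_num) n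
    norm_num at this
    linarith
  have hsq : (n : ℝ) ≤ n ^ 2 := by exact_mod_cast Nat.le_self_pow two_ne_zero n
  have hexp : exp (-c * (2 * n + 1) ^ 2) ≤ exp (-c) * exp (-8 * c) ^ n := by
    rw [← exp_nat_mul, ← exp_add, exp_le_exp]
    nlinarith [mul_nonneg hc (sub_nonneg.2 hsq)]
  rw [mul_pow, mul_left_comm]
  exact mul_le_mul hlin hexp (exp_pos _).le (by positivity)

lemma three_mul_exp_neg_mul_le_half {c : ℝ} (hc : 1 / 4 ≤ c) : 3 * exp (-8 * c) ≤ 1 / 2 := by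
  have he2 : 6 ≤ exp 2 := by
    rw [show (2 : ℝ) = 1 + 1 by norm_num, exp_add]
    nlinarith [exp_one_gt_d9]
  have : exp (-8 * c) * exp 2 ≤ 1 := by
    rw [← exp_add, exp_le_one_iff]; linarith
  nlinarith [exp_pos (-8 * c)]

lemma norm_exp_mul_cos_le (x y : ℝ) : ‖exp x * cos y‖ ≤ exp x := by
  rw [norm_mul, norm_of_nonneg (exp_pos x).le]
  exact mul_le_of_le_one_right (exp_pos x).le (abs_cos_le_one y)

noncomputable def oddCosSeries (c z : ℝ) : ℝ :=
  ∑' n : ℕ, exp (-c * (2 * n + 1) ^ 2) * cos ((2 * n + 1) * z)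

noncomputable def oddSinSeries (c z : ℝ) : ℝ :=
  ∑' n : ℕ, exp (-c * (2 * n + 1) ^ 2) / (2 * n + 1) * sin ((2 * n + 1) * z)

lemma summable_oddCosSeries {c : ℝ} (hc : 0 < c) (z : ℝ) :
    Summable fun n : ℕ => exp (-c * (2 * n + 1) ^ 2) * cos ((2 * n + 1) * z) :=
  (summable_exp_neg_mul_odd_sq hc).of_norm_bounded fun _ => norm_exp_mul_cos_le _ _

lemma two_mul_oddCosSeries {c : ℝ} (hc : 0 < c) (z : ℝ) :
    2 * oddCosSeries c z = ∑' k : ℤ, exp (-c * (2 * k + 1) ^ 2) * cos ((2 * k + 1) * z) := by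
  have hs : Summable fun k : ℤ => exp (-c * (2 * k + 1) ^ 2) * cos ((2 * k + 1) * z) :=
    (summable_exp_neg_mul_int_add_sq (a := 4 * c) (by positivity) (1 / 2)).of_norm_bounded
      fun k => (norm_exp_mul_cos_le _ _).trans_eq (by ring_nf)
  rw [← tsum_nat_add_neg_add_one hs, oddCosSeries, ← tsum_mul_left]
  refine tsum_congr fun n => ?_
  push_cast
  rw [show 2 * -((n : ℝ) + 1) + 1 = -(2 * n + 1) by ring, neg_sq, neg_mul (2 * (n : ℝ) + 1) z,
    cos_neg, two_mul]

lemma oddCosSeries_eq_tsum_neg_one_zpow_mul {c : ℝ} (hc : 0 < c) (z : ℝ) :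
    oddCosSeries c z = √(π / (4 * c)) / 2 *
      ∑' n : ℤ, (-1 : ℝ) ^ n * exp (-(π ^ 2 / (4 * c)) * (n + z / π) ^ 2) := by
  linarith [two_mul_oddCosSeries hc z, tsum_exp_neg_mul_odd_sq_mul_cos hc z]

lemma oddCosSeries_nonpos_of_le {c z : ℝ} (hc0 : 0 < c) (hc : c ≤ π ^ 2 / 8) (hz1 : π / 2 ≤ z)
    (hz2 : z ≤ π) : oddCosSeries c z ≤ 0 := by
  rw [oddCosSeries_eq_tsum_neg_one_zpow_mul hc0]
  refine mul_nonpos_of_nonneg_of_nonpos (by positivity)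
    (tsum_neg_one_zpow_mul_exp_neg_mul_sq_nonpos ?_ ?_ ?_)
  · rw [le_div_iff₀ (by positivity)]; linarith
  · rw [le_div_iff₀ pi_pos]; linarith
  · rw [div_le_one pi_pos]; exact hz2

lemma oddCosSeries_nonpos_of_quarter_le {c z : ℝ} (hc : 1 / 4 ≤ c) (hz : cos z ≤ 0) :
    oddCosSeries c z ≤ 0 := by
  have hc0 : 0 < c := by linarith
  rw [oddCosSeries, ← neg_nonneg, ← tsum_neg]
  have h0 : 0 ≤ -(exp (-c) * cos z) :=
    neg_nonneg.2 (mul_nonpos_of_nonneg_of_nonpos (exp_pos _).le hz)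
  refine tsum_nonneg_of_abs_le_geometric (summable_oddCosSeries hc0 z).neg (by simpa using h0)
    (by positivity) (three_mul_exp_neg_mul_le_half hc) fun n => ?_
  have hterm := odd_mul_exp_neg_mul_odd_sq_le hc0.le (n + 1)
  push_cast at hterm ⊢
  rw [abs_neg, abs_mul, abs_of_pos (exp_pos _)]
  calc exp (-c * (2 * (n + 1) + 1) ^ 2) * |cos ((2 * (n + 1) + 1) * z)|
      ≤ exp (-c * (2 * (n + 1) + 1) ^ 2) * ((2 * (n + 1) + 1) * -cos z) := by
        gcongr
        exact_mod_cast (abs_of_nonpos hz) ▸ abs_cos_odd_mul_le (n + 1) z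
    _ ≤ exp (-c) * (3 * exp (-8 * c)) ^ (n + 1) * -cos z := by
        rw [← mul_assoc, mul_comm (exp _)]
        exact mul_le_mul_of_nonneg_right hterm (by linarith)
    _ = _ := by ring_nf

lemma oddCosSeries_nonpos {c z : ℝ} (hc : 0 < c) (hz1 : π / 2 ≤ z) (hz2 : z ≤ π) :
    oddCosSeries c z ≤ 0 := by
  rcases le_total c (1 / 4) with hsmall | hlarge
  · exact oddCosSeries_nonpos_of_le hc (by nlinarith [pi_gt_three]) hz1 hz2
  · exact oddCosSeries_nonpos_of_quarter_le hlarge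
      (cos_nonpos_of_pi_div_two_le_of_le hz1 (by linarith [pi_pos]))

lemma hasDerivAt_oddSinSeries {c : ℝ} (hc : 0 < c) (z : ℝ) :
    HasDerivAt (oddSinSeries c) (oddCosSeries c z) z := by
  have hterm : ∀ (n : ℕ) (x : ℝ),
      HasDerivAt (fun x => exp (-c * (2 * n + 1) ^ 2) / (2 * n + 1) * sin ((2 * n + 1) * x))
        (exp (-c * (2 * n + 1) ^ 2) * cos ((2 * n + 1) * x)) x := fun n x => by
    have h := (((hasDerivAt_id x).const_mul (2 * n + 1 : ℝ)).sin).const_mul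
      (exp (-c * (2 * n + 1) ^ 2) / (2 * n + 1))
    refine h.congr_deriv ?_
    simp only [id, mul_one]
    field_simp
  exact hasDerivAt_tsum (summable_exp_neg_mul_odd_sq hc) hterm (fun _ _ => norm_exp_mul_cos_le _ _)
    (y₀ := 0) (by simp) z

lemma oddSinSeries_pi_sub (c z : ℝ) : oddSinSeries c (π - z) = oddSinSeries c z := by
  refine tsum_congr fun n => ?_
  rw [show (2 * n + 1) * (π - z) = π - (2 * n + 1) * z + n * (2 * π) by ring,
    sin_add_nat_mul_two_pi, sin_pi_sub]

lemma oddSinSeries_le_pi_div_two {c z : ℝ} (hc : 0 < c) (hz0 : 0 ≤ z) (hzπ : z ≤ π) :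
    oddSinSeries c z ≤ oddSinSeries c (π / 2) := by
  have hanti : AntitoneOn (oddSinSeries c) (Set.Icc (π / 2) π) := by
    refine antitoneOn_of_hasDerivWithinAt_nonpos (convex_Icc _ _)
      (fun x _ => (hasDerivAt_oddSinSeries hc x).continuousAt.continuousWithinAt)
      (fun x _ => (hasDerivAt_oddSinSeries hc x).hasDerivWithinAt) fun x hx => ?_
    rw [interior_Icc] at hx
    exact oddCosSeries_nonpos hc hx.1.le hx.2.le
  have hπ := pi_pos
  rcases le_total (π / 2) z with hz | hz
  · exact hanti ⟨le_rfl, by linarith⟩ ⟨hz, hzπ⟩ hz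
  · rw [← oddSinSeries_pi_sub c z]
    exact hanti ⟨le_rfl, by linarith⟩ ⟨by linarith, by linarith⟩ (by linarith)

lemma Fd_eq_oddSinSeries (d t k : ℝ) :
    Fd d t k = 4 / π * oddSinSeries (π ^ 2 * t / (8 * d ^ 2)) (π * k / (2 * d) + π / 2) := by
  rw [Fd, oddSinSeries, ← tsum_mul_left]
  refine tsum_congr fun n => ?_
  rw [show (2 * n + 1) * (π * k / (2 * d) + π / 2) = (2 * n + 1) * π * k / (2 * d) + π / 2 + n * π
    by ring, sin_add_nat_mul_pi, sin_add_pi_div_two]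
  field_simp

theorem Fd_le_Fd_zero (d t : ℝ) (hd : 0 < d) (ht : 0 < t) :
    (∀ k ∈ Set.Icc (-d) d, Fd d t k ≤ Fd d t 0) ∧
    (⨆ k : Set.Icc (-d) d, Fd d t (k : ℝ)) = Fd d t 0 := by
  have hle : ∀ k ∈ Set.Icc (-d) d, Fd d t k ≤ Fd d t 0 := by
    rintro k ⟨hk1, hk2⟩
    have hπ := pi_pos
    have hz : π * k / (2 * d) + π / 2 = π * (k + d) / (2 * d) := by field_simp
    rw [Fd_eq_oddSinSeries, Fd_eq_oddSinSeries, mul_zero, zero_div, zero_add, hz]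
    refine mul_le_mul_of_nonneg_left (oddSinSeries_le_pi_div_two (by positivity) ?_ ?_)
      (by positivity)
    · exact div_nonneg (mul_nonneg hπ.le (by linarith)) (by positivity)
    · rw [div_le_iff₀ (by positivity)]; nlinarith
  have h0 : (0 : ℝ) ∈ Set.Icc (-d) d := ⟨by linarith, hd.le⟩
  have : Nonempty (Set.Icc (-d) d) := ⟨⟨0, h0⟩⟩
  exact ⟨hle, le_antisymm (ciSup_le fun k => hle k k.2)
    (le_ciSup_of_le ⟨Fd d t 0, Set.forall_mem_range.2 fun k => hle k k.2⟩ ⟨0, h0⟩ le_rfl)⟩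
end
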